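/- Let n ≥ 1 and let μ_1, …, μ_n satisfy 0 < μ_1 ≤ μ_2 ≤ … ≤ μ_n. Let D be the first canonical form matrix of μ and let π be a probability vector such that (π, D) represents the unit exponential distribution. Then π_i = (1/μ_i) · ∏_{j=i+1}^{n} (1 − 1/μ_j) for every i with 2 ≤ i ≤ n (the empty product for i = n being 1), and π_1 = ∏_{j=2}^{n} (1 − 1/μ_j). -/

import Mathlib

open Matrix

/-- The first canonical form matrix of rates `μ`: diagonal `-μ i`, superdiagonal `μ i`. -/
def canonD {n : ℕ} (μ : Fin n → ℝ) : Matrix (Fin n) (Fin n) ℝ :=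
  Matrix.of fun i j => if j = i then -μ i else if (j : ℕ) = (i : ℕ) + 1 then μ i else 0

/-- `(π, D)` represents the unit exponential distribution:
`π · exp(tD) · 𝟙 = e^{-t}` for all `t ≥ 0`. -/
def ReprUnitExp {n : ℕ} (π : Fin n → ℝ) (D : Matrix (Fin n) (Fin n) ℝ) : Prop :=
  ∀ t : ℝ, 0 ≤ t → (π ᵥ* NormedSpace.exp (t • D)) ⬝ᵥ (fun _ => 1) = Real.exp (-t)

/-!
Differentiating `t ↦ π exp(tD) 𝟙 = e^{-t}` from the right at `t = 0` gives the moments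
`π Dᵏ 𝟙 = (-1)ᵏ`. For the first canonical form, `D` maps the indicator `uᵢ` of `{0, …, i}` to
`-μᵢ eᵢ`, so `μᵢ₊₁ uᵢ = (D + μᵢ₊₁) uᵢ₊₁`. Descending from `uₙ₋₁ = 𝟙`, this gives
`π Dᵏ uᵢ = (-1)ᵏ ∏_{j > i} (1 - 1/μⱼ)`; for `k = 0` these are the partial sums of `π`, whose
differences are the claimed entries.
-/

open Set NormedSpace

theorem Set.EqOn.eqOn_of_hasDerivAt_Ici {f g f' g' : ℝ → ℝ} {a : ℝ}
    (hf : ∀ t, HasDerivAt f (f' t) t) (hg : ∀ t, HasDerivAt g (g' t) t)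
    (h : EqOn f g (Ici a)) : EqOn f' g' (Ici a) := fun t ht =>
  (uniqueDiffOn_Ici a t ht).eq_deriv _ (((hf t).hasDerivWithinAt).congr h.symm (h ht).symm)
    (hg t).hasDerivWithinAt

theorem hasDerivAt_vecMul_exp_smul_dotProduct {ι : Type*} [Fintype ι] [DecidableEq ι]
    (A : Matrix ι ι ℝ) (x v : ι → ℝ) (t : ℝ) :
    HasDerivAt (fun s : ℝ => (x ᵥ* exp (s • A)) ⬝ᵥ v) ((x ᵥ* exp (t • A)) ⬝ᵥ (A *ᵥ v)) t := by
  -- `exp` depends only on the topology; any normed algebra structure serves for its derivative.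
  let _ : NormedRing (Matrix ι ι ℝ) := Matrix.linftyOpNormedRing
  let _ : NormedAlgebra ℝ (Matrix ι ι ℝ) := Matrix.linftyOpNormedAlgebra
  let L : Matrix ι ι ℝ →ₗ[ℝ] ℝ :=
    { toFun := fun M => (x ᵥ* M) ⬝ᵥ v
      map_add' := fun M N => by simp only [vecMul_add, add_dotProduct]
      map_smul' := fun c M => by simp only [vecMul_smul, smul_dotProduct, RingHom.id_apply] }
  have hL : (x ᵥ* exp (t • A)) ⬝ᵥ (A *ᵥ v) = L (exp (t • A) * A) := by
    simp only [L, LinearMap.coe_mk, AddHom.coe_mk, ← vecMul_vecMul, dotProduct_mulVec]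
  rw [hL]
  exact (LinearMap.toContinuousLinearMap L).hasFDerivAt.comp_hasDerivAt t
    (hasDerivAt_exp_smul_const A t)

theorem ReprUnitExp.dotProduct_pow_mulVec_one {n : ℕ} {π : Fin n → ℝ}
    {D : Matrix (Fin n) (Fin n) ℝ} (h : ReprUnitExp π D) (k : ℕ) :
    π ⬝ᵥ (D ^ k *ᵥ 1) = (-1) ^ k := by
  have hexp : ∀ m : ℕ, EqOn (fun t => (π ᵥ* exp (t • D)) ⬝ᵥ (D ^ m *ᵥ 1))
      (fun t => (-1) ^ m * Real.exp (-t)) (Ici 0) := by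
    intro m
    induction m with
    | zero => exact fun t ht => by simpa [← Pi.one_def] using h t ht
    | succ m ih =>
      refine ih.eqOn_of_hasDerivAt_Ici (fun t => ?_) (fun t => ?_)
      · have := hasDerivAt_vecMul_exp_smul_dotProduct D π (D ^ m *ᵥ 1) t
        rwa [mulVec_mulVec, ← pow_succ'] at this
      · simpa [pow_succ] using
          ((Real.hasDerivAt_exp (-t)).comp t (hasDerivAt_neg t)).const_mul ((-1 : ℝ) ^ m)
  simpa using hexp k self_mem_Ici

theorem Set.indicator_Iic_of_covBy {α M : Type*} [LinearOrder α] [AddMonoid M] {a b : α}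
    (h : a ⋖ b) (f : α → M) :
    (Iic b).indicator f = (Iic a).indicator f + Pi.single b (f b) := by
  funext x
  rcases lt_trichotomy x b with hx | rfl | hx
  · simp [hx.le, h.le_of_lt hx, hx.ne]
  · simp [h.lt.not_ge]
  · simp [hx.not_ge, (h.lt.trans hx).not_ge, hx.ne']

theorem Set.indicator_Iic_of_isMax {α M : Type*} [LinearOrder α] [Zero M] {a : α}
    (h : IsMax a) (f : α → M) : (Iic a).indicator f = f :=
  funext fun _ => indicator_of_mem (mem_Iic.2 (le_of_not_gt h.not_lt)) f

theorem Set.indicator_Iic_of_isMin {α M : Type*} [LinearOrder α] [Zero M] {a : α}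
    (h : IsMin a) (f : α → M) : (Iic a).indicator f = Pi.single a (f a) := by
  funext x
  rcases eq_or_ne x a with rfl | hx
  · simp
  · have : ¬x ≤ a := fun hxa => hx (le_antisymm hxa (h hxa))
    simp [hx, this]

theorem Finset.prod_Ioi_of_covBy {α M : Type*} [LinearOrder α] [LocallyFiniteOrderTop α]
    [CommMonoid M] {a b : α} (h : a ⋖ b) (f : α → M) :
    ∏ x ∈ Ioi a, f x = f b * ∏ x ∈ Ioi b, f x := by
  have : Ioi a = Ici b := coe_inj.1 (by simpa using h.Ioi_eq)
  rw [this, mul_prod_Ioi_eq_prod_Ici]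

section canonD

variable {n : ℕ} (μ : Fin n → ℝ)

theorem Fin.covBy_iff_val_add_one_eq {i j : Fin n} : i ⋖ j ↔ (i : ℕ) + 1 = j :=
  Fin.covBy_iff.trans Nat.covBy_iff_add_one_eq

theorem canonD_apply_self (i : Fin n) : canonD μ i i = -μ i := by
  simp [canonD]

theorem canonD_apply_of_covBy {i j : Fin n} (h : i ⋖ j) : canonD μ i j = μ i := by
  simp [canonD, h.lt.ne', (Fin.covBy_iff_val_add_one_eq.1 h).symm]

theorem canonD_apply_eq_zero {i j : Fin n} (h₁ : j ≠ i) (h₂ : ¬i ⋖ j) : canonD μ i j = 0 := by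
  rw [Fin.covBy_iff_val_add_one_eq] at h₂
  simp [canonD, h₁, Ne.symm h₂]

theorem canonD_mulVec_apply_of_covBy (v : Fin n → ℝ) {i j : Fin n} (h : i ⋖ j) :
    (canonD μ *ᵥ v) i = μ i * (v j - v i) := by
  rw [mulVec, dotProduct, Fintype.sum_eq_add i j h.lt.ne fun l hl =>
    by rw [canonD_apply_eq_zero μ hl.1 fun hil => hl.2 (hil.unique_right h), zero_mul],
    canonD_apply_self, canonD_apply_of_covBy μ h]
  ring

theorem canonD_mulVec_apply_of_isMax (v : Fin n → ℝ) {i : Fin n} (h : IsMax i) :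
    (canonD μ *ᵥ v) i = -(μ i * v i) := by
  rw [mulVec, dotProduct, Fintype.sum_eq_single i fun l hl =>
    by rw [canonD_apply_eq_zero μ hl fun hil => h.not_lt hil.lt, zero_mul],
    canonD_apply_self, neg_mul]

theorem canonD_mulVec_indicator_Iic (i : Fin n) :
    canonD μ *ᵥ (Iic i).indicator 1 = -μ i • Pi.single i 1 := by
  funext l
  rcases lt_trichotomy l i with hli | rfl | hil
  · have hl := Order.covBy_succ_of_not_isMax (not_isMax_of_lt hli)
    rw [canonD_mulVec_apply_of_covBy μ _ hl]
    simp [hli.le, Order.succ_le_of_lt hli, hli.ne]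
  · by_cases hl : IsMax l
    · simp [canonD_mulVec_apply_of_isMax μ _ hl]
    · have hlj := Order.covBy_succ_of_not_isMax hl
      simp [canonD_mulVec_apply_of_covBy μ _ hlj, hlj.lt.not_ge]
  · by_cases hl : IsMax l
    · simp [canonD_mulVec_apply_of_isMax μ _ hl, hil.not_ge, hil.ne']
    · have hlj := Order.covBy_succ_of_not_isMax hl
      simp [canonD_mulVec_apply_of_covBy μ _ hlj, hil.not_ge, (hil.trans hlj.lt).not_ge, hil.ne']

theorem dotProduct_canonD_pow_mulVec_indicator_Iic (hμ : ∀ i, μ i ≠ 0) {π : Fin n → ℝ}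
    (hπ : ∀ k : ℕ, π ⬝ᵥ (canonD μ ^ k *ᵥ 1) = (-1) ^ k) (i : Fin n) (k : ℕ) :
    π ⬝ᵥ (canonD μ ^ k *ᵥ (Iic i).indicator 1) =
      (-1) ^ k * ∏ j ∈ Finset.Ioi i, (1 - 1 / μ j) := by
  induction i using WellFoundedGT.induction generalizing k with
  | _ i ih =>
  by_cases hi : IsMax i
  · rw [indicator_Iic_of_isMax hi, Finset.Ioi_eq_empty.2 hi, hπ, Finset.prod_empty, mul_one]
  · set j := Order.succ i
    have hij : i ⋖ j := Order.covBy_succ_of_not_isMax hi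
    have hu : (Iic i).indicator (1 : Fin n → ℝ) =
        (Iic j).indicator 1 + (μ j)⁻¹ • (canonD μ *ᵥ (Iic j).indicator 1) := by
      rw [canonD_mulVec_indicator_Iic, indicator_Iic_of_covBy hij, smul_smul, mul_neg,
        inv_mul_cancel₀ (hμ j), neg_one_smul, Pi.one_apply, add_neg_cancel_right]
    rw [hu, mulVec_add, mulVec_smul, mulVec_mulVec, ← pow_succ, dotProduct_add,
      dotProduct_smul, ih j hij.lt, ih j hij.lt, Finset.prod_Ioi_of_covBy hij, smul_eq_mul]
    field_simp
    ring

end canonD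

namespace ReprUnitExp

variable {n : ℕ} {μ π : Fin n → ℝ}

theorem dotProduct_indicator_Iic (h : ReprUnitExp π (canonD μ)) (hμ : ∀ i, μ i ≠ 0)
    (i : Fin n) : π ⬝ᵥ (Iic i).indicator 1 = ∏ j ∈ Finset.Ioi i, (1 - 1 / μ j) := by
  simpa using dotProduct_canonD_pow_mulVec_indicator_Iic μ hμ h.dotProduct_pow_mulVec_one i 0

theorem apply_of_covBy (h : ReprUnitExp π (canonD μ)) (hμ : ∀ i, μ i ≠ 0) {i j : Fin n}
    (hij : i ⋖ j) : π j = 1 / μ j * ∏ l ∈ Finset.Ioi j, (1 - 1 / μ l) := by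
  have hj := h.dotProduct_indicator_Iic hμ j
  rw [indicator_Iic_of_covBy hij, dotProduct_add, h.dotProduct_indicator_Iic hμ i,
    Finset.prod_Ioi_of_covBy hij, Pi.one_apply, dotProduct_single, mul_one] at hj
  linear_combination hj

theorem apply_of_isMin (h : ReprUnitExp π (canonD μ)) (hμ : ∀ i, μ i ≠ 0) {i : Fin n}
    (hi : IsMin i) : π i = ∏ l ∈ Finset.Ioi i, (1 - 1 / μ l) := by
  rw [← h.dotProduct_indicator_Iic hμ i, indicator_Iic_of_isMin hi, Pi.one_apply,
    dotProduct_single, mul_one]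

end ReprUnitExp

theorem stmt1_general {n : ℕ} (hn : 0 < n) (μ : Fin n → ℝ) (hpos : ∀ i, 0 < μ i)
    (π : Fin n → ℝ) (hrep : ReprUnitExp π (canonD μ)) :
    (∀ i : Fin n, 1 ≤ (i : ℕ) →
        π i = (1 / μ i) * ∏ j ∈ Finset.Ioi i, (1 - 1 / μ j)) ∧
      π ⟨0, hn⟩ = ∏ j ∈ Finset.Ioi (⟨0, hn⟩ : Fin n), (1 - 1 / μ j) := by
  have hμ : ∀ i, μ i ≠ 0 := fun i => (hpos i).ne'
  refine ⟨fun i hi => hrep.apply_of_covBy hμ (i := ⟨i - 1, by omega⟩) ?_,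
    hrep.apply_of_isMin hμ fun j _ => Nat.zero_le j⟩
  rw [Fin.covBy_iff_val_add_one_eq, Fin.val_mk]
  omega

theorem stmt1 {n : ℕ} (hn : 0 < n) (μ : Fin n → ℝ) (hpos : ∀ i, 0 < μ i)
    (hmono : Monotone μ) (π : Fin n → ℝ) (hnonneg : ∀ i, 0 ≤ π i)
    (hsum : ∑ i, π i = 1) (hrep : ReprUnitExp π (canonD μ)) :
    (∀ i : Fin n, 1 ≤ (i : ℕ) →
        π i = (1 / μ i) * ∏ j ∈ Finset.Ioi i, (1 - 1 / μ j)) ∧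
      π ⟨0, hn⟩ = ∏ j ∈ Finset.Ioi (⟨0, hn⟩ : Fin n), (1 - 1 / μ j) :=
  stmt1_general hn μ hpos π hrep
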